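/- Let ρ(u) = √(u(4−u))/(2πu) for u ∈ (0,4] (the Marchenko–Pastur density), let L > 0, and define B(κ) = 1 − 2κ + κ·log(1+2κ) for 0 ≤ κ ≤ 1 and B(κ) = −1 + κ·log((2κ+1)/(2κ−1)) for κ > 1. Then lim_{t→0⁺} (1/t)·( L − ∫₀⁴ L·ρ(u)·B( t/(2π·ρ(u)·L) ) du ) = 4/π. -/

import Mathlib

open MeasureTheory Real Filter

/-- The Marchenko–Pastur density `ρ(u) = √(u(4−u))/(2πu)` on `(0, 4]`. -/
noncomputable def rhoMP (u : ℝ) : ℝ :=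
  Real.sqrt (u * (4 - u)) / (2 * Real.pi * u)

/-- The GOE two-level form factor `B(κ)`:
`B(κ) = 1 − 2κ + κ log(1+2κ)` for `0 ≤ κ ≤ 1`, and
`B(κ) = −1 + κ log((2κ+1)/(2κ−1))` for `κ > 1`. -/
noncomputable def Bgoe (κ : ℝ) : ℝ :=
  if κ ≤ 1 then 1 - 2 * κ + κ * Real.log (1 + 2 * κ)
  else -1 + κ * Real.log ((2 * κ + 1) / (2 * κ - 1))

/-! Substituting `κ = t/(2πLρ(u))` and using `∫ρ = 1`, the quantity `(1/t)(L − ∫ LρB)`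
becomes the integral of `(1 − B(κ))/(2πκ)`. Since `0 ≤ 1 − B(κ) ≤ 2κ` and `(1 − B(κ))/κ → 2`
as `κ → 0⁺`, dominated convergence shows that every point of the support `(0, 4)` contributes
`1/π` to the slope, whatever the local density there; hence the slope is `4/π`. -/

open Topology Set
open scoped Interval

lemma measurable_Bgoe : Measurable Bgoe :=
  Measurable.ite measurableSet_Iic (by fun_prop) (by fun_prop)

lemma one_sub_Bgoe_nonneg {κ : ℝ} (hκ : 0 < κ) : 0 ≤ 1 - Bgoe κ := by
  unfold Bgoe
  split_ifs with h
  · have := Real.log_le_sub_one_of_pos (x := 1 + 2 * κ) (by linarith)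
    nlinarith
  · have hd : 0 < 2 * κ - 1 := by linarith
    have hlog := Real.log_le_sub_one_of_pos (x := (2 * κ + 1) / (2 * κ - 1)) (by positivity)
    have hfrac : (2 * κ + 1) / (2 * κ - 1) - 1 = 2 / (2 * κ - 1) := by field_simp; ring
    rw [hfrac] at hlog
    have : κ * (2 / (2 * κ - 1)) ≤ 2 := by rw [mul_div_assoc', div_le_iff₀ hd]; linarith
    nlinarith

lemma one_sub_Bgoe_le {κ : ℝ} (hκ : 0 < κ) : 1 - Bgoe κ ≤ 2 * κ := by
  unfold Bgoe
  split_ifs with h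
  · nlinarith [Real.log_nonneg (x := 1 + 2 * κ) (by linarith)]
  · have hd : 0 < 2 * κ - 1 := by linarith
    have : 0 ≤ Real.log ((2 * κ + 1) / (2 * κ - 1)) :=
      Real.log_nonneg (by rw [le_div_iff₀ hd]; linarith)
    nlinarith

lemma tendsto_one_sub_Bgoe_div : Tendsto (fun κ => (1 - Bgoe κ) / κ) (𝓝[>] 0) (𝓝 2) := by
  have hcont : Tendsto (fun κ : ℝ => 2 - Real.log (1 + 2 * κ)) (𝓝 0) (𝓝 2) := by
    have : ContinuousAt (fun κ : ℝ => 2 - Real.log (1 + 2 * κ)) 0 := by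
      fun_prop (disch := norm_num)
    simpa using this.tendsto
  refine (hcont.mono_left nhdsWithin_le_nhds).congr' ?_
  filter_upwards [Ioo_mem_nhdsGT one_pos] with κ ⟨hκ0, hκ1⟩
  rw [Bgoe, if_pos hκ1.le]
  field_simp
  ring

lemma tendsto_div_const_nhdsGT_zero {c : ℝ} (hc : 0 < c) :
    Tendsto (fun t : ℝ => t / c) (𝓝[>] 0) (𝓝[>] 0) := by
  refine tendsto_nhdsWithin_of_tendsto_nhds_of_eventually_within _ ?_ ?_
  · simpa using ((continuous_id.div_const c).tendsto 0).mono_left nhdsWithin_le_nhds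
  · filter_upwards [self_mem_nhdsWithin] with t ht using div_pos ht hc

lemma rhoMP_pos {u : ℝ} (hu : u ∈ Ioo (0 : ℝ) 4) : 0 < rhoMP u := by
  obtain ⟨h0, h4⟩ := hu
  unfold rhoMP
  exact div_pos (Real.sqrt_pos.2 (by nlinarith)) (by positivity)

lemma rhoMP_nonneg {u : ℝ} (hu : 0 ≤ u) : 0 ≤ rhoMP u := by
  unfold rhoMP; positivity

noncomputable def cdfMP (u : ℝ) : ℝ :=
  2 / π * Real.arcsin (√u / 2) + √(u * (4 - u)) / (2 * π)

lemma continuous_cdfMP : Continuous cdfMP := by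
  unfold cdfMP; fun_prop

lemma hasDerivAt_cdfMP {u : ℝ} (hu : u ∈ Ioo (0 : ℝ) 4) : HasDerivAt cdfMP (rhoMP u) u := by
  obtain ⟨h0, h4⟩ := hu
  have ha2 : √u ^ 2 = u := Real.sq_sqrt h0.le
  have hb2 : √(4 - u) ^ 2 = 4 - u := Real.sq_sqrt (by linarith)
  have hsplit : √(u * (4 - u)) = √u * √(4 - u) := Real.sqrt_mul h0.le _
  have hcos : √(1 - (√u / 2) ^ 2) = √(4 - u) / 2 := by
    rw [← Real.sqrt_sq (by positivity : 0 ≤ √(4 - u) / 2), div_pow, div_pow, ha2, hb2]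
    ring_nf
  have hasin : HasDerivAt (fun u => Real.arcsin (√u / 2))
      (1 / √(1 - (√u / 2) ^ 2) * (1 / (2 * √u) / 2)) u :=
    (Real.hasDerivAt_arcsin (by nlinarith) (by nlinarith)).comp u
      ((Real.hasDerivAt_sqrt h0.ne').div_const 2)
  have hprod : HasDerivAt (fun u => u * (4 - u)) (4 - 2 * u) u := by
    refine ((hasDerivAt_id' u).mul
      ((hasDerivAt_const u (4 : ℝ)).sub (hasDerivAt_id' u))).congr_deriv ?_
    simp only [Pi.sub_apply]; ring
  have hroot := (Real.hasDerivAt_sqrt (by nlinarith)).comp u hprod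
  refine ((hasin.const_mul (2 / π)).add (hroot.div_const (2 * π))).congr_deriv ?_
  unfold rhoMP
  rw [hcos, hsplit]
  field_simp
  linear_combination -2 * (√u ^ 2 * hb2 + (4 - u) * ha2)

lemma intervalIntegrable_rhoMP : IntervalIntegrable rhoMP volume 0 4 := by
  refine intervalIntegral.intervalIntegrable_deriv_of_nonneg continuous_cdfMP.continuousOn ?_ ?_ <;>
    norm_num only [min_eq_left, max_eq_right]
  · exact fun u hu => hasDerivAt_cdfMP hu
  · exact fun u hu => rhoMP_nonneg hu.1.le

lemma integral_rhoMP : ∫ u in (0 : ℝ)..4, rhoMP u = 1 := by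
  rw [intervalIntegral.integral_eq_sub_of_hasDerivAt_of_le zero_le_four
    continuous_cdfMP.continuousOn (fun u hu => hasDerivAt_cdfMP hu) intervalIntegrable_rhoMP]
  have : √4 = 2 := by rw [show (4 : ℝ) = 2 ^ 2 by norm_num, Real.sqrt_sq zero_le_two]
  simp [cdfMP, this]

section LocalContribution

variable {t x : ℝ}

lemma one_div_mul_sub_mul_Bgoe_eq (ht : 0 < t) (hx : 0 < x) :
    1 / t * (x - x * Bgoe (t / (2 * π * x))) =
      (1 - Bgoe (t / (2 * π * x))) / (t / (2 * π * x)) / (2 * π) := by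
  field_simp

lemma abs_one_div_mul_sub_mul_Bgoe_le (ht : 0 < t) (hx : 0 < x) :
    |1 / t * (x - x * Bgoe (t / (2 * π * x)))| ≤ 1 / π := by
  have hκ : 0 < t / (2 * π * x) := by positivity
  rw [one_div_mul_sub_mul_Bgoe_eq ht hx, abs_of_nonneg (by
    have := one_sub_Bgoe_nonneg hκ; positivity)]
  calc (1 - Bgoe (t / (2 * π * x))) / (t / (2 * π * x)) / (2 * π)
      ≤ 2 * (t / (2 * π * x)) / (t / (2 * π * x)) / (2 * π) := by
        gcongr; exact one_sub_Bgoe_le hκ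
    _ = 1 / π := by field_simp

lemma tendsto_one_div_mul_sub_mul_Bgoe (hx : 0 < x) :
    Tendsto (fun t => 1 / t * (x - x * Bgoe (t / (2 * π * x)))) (𝓝[>] 0) (𝓝 (1 / π)) := by
  have hlim := (tendsto_one_sub_Bgoe_div.comp
    (tendsto_div_const_nhdsGT_zero (by positivity : 0 < 2 * π * x))).div_const (2 * π)
  rw [show 2 / (2 * π) = 1 / π by field_simp] at hlim
  refine hlim.congr' ?_
  filter_upwards [self_mem_nhdsWithin] with t ht
  exact (one_div_mul_sub_mul_Bgoe_eq ht hx).symm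

end LocalContribution

theorem tendsto_slope_integral_mul_Bgoe {a b : ℝ} {n : ℝ → ℝ}
    (hn : IntervalIntegrable n volume a b)
    (hn_pos : ∀ᵐ u, u ∈ Ι a b → 0 < n u) :
    Tendsto (fun t => 1 / t * ((∫ u in a..b, n u) - ∫ u in a..b, n u * Bgoe (t / (2 * π * n u))))
      (𝓝[>] 0) (𝓝 ((b - a) / π)) := by
  set F : ℝ → ℝ → ℝ := fun t u => 1 / t * (n u - n u * Bgoe (t / (2 * π * n u))) with hF
  have hF_meas (t : ℝ) : AEStronglyMeasurable (F t) (volume.restrict (Ι a b)) := by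
    have hn_meas := hn.def'.aemeasurable
    exact (aemeasurable_const.mul (hn_meas.sub (hn_meas.mul (measurable_Bgoe.comp_aemeasurable
      (aemeasurable_const.div (aemeasurable_const.mul hn_meas)))))).aestronglyMeasurable
  have hF_bound : ∀ t > 0, ∀ᵐ u, u ∈ Ι a b → ‖F t u‖ ≤ 1 / π := fun t ht => by
    filter_upwards [hn_pos] with u hu hmem
    exact abs_one_div_mul_sub_mul_Bgoe_le ht (hu hmem)
  have hF_int : ∀ t > 0, IntervalIntegrable (F t) volume a b := fun t ht =>
    (intervalIntegrable_const (c := 1 / π)).mono_fun' (hF_meas t)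
      ((ae_restrict_iff' measurableSet_uIoc).2 (hF_bound t ht))
  have hlim : Tendsto (fun t => ∫ u in a..b, F t u) (𝓝[>] 0) (𝓝 ((b - a) / π)) := by
    have := intervalIntegral.tendsto_integral_filter_of_dominated_convergence (fun _ => 1 / π)
      (Eventually.of_forall hF_meas)
      (eventually_mem_nhdsWithin.mono fun t (ht : t ∈ Ioi 0) => hF_bound t ht)
      intervalIntegrable_const
      (hn_pos.mono fun u hu hmem => tendsto_one_div_mul_sub_mul_Bgoe (hu hmem))
    simpa [intervalIntegral.integral_const, div_eq_mul_inv] using this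
  refine hlim.congr' ?_
  filter_upwards [self_mem_nhdsWithin] with t (ht : 0 < t)
  have hsplit : (∫ u in a..b, n u * Bgoe (t / (2 * π * n u))) =
      ∫ u in a..b, n u - t * F t u := by
    congr 1; ext u; simp only [hF]; field_simp; ring
  rw [hsplit, intervalIntegral.integral_sub hn ((hF_int t ht).const_mul t),
    intervalIntegral.integral_const_mul t, sub_sub_cancel, ← mul_assoc, one_div_mul_cancel ht.ne',
    one_mul]

/-- Early-time slope of the refined connected two-point form factor of the LOE:
`lim_{t→0⁺} (1/t)(L − ∫₀⁴ Lρ(u) B(t/(2πρ(u)L)) du) = 4/π`. -/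
theorem loe_refined_form_factor_slope (L : ℝ) (hL : 0 < L) :
    Tendsto (fun t : ℝ =>
        (1 / t) * (L - ∫ u in (0:ℝ)..4, L * rhoMP u * Bgoe (t / (2 * Real.pi * rhoMP u * L))))
      (nhdsWithin 0 (Set.Ioi 0)) (nhds (4 / Real.pi)) := by
  have hpos : ∀ᵐ u, u ∈ Ι (0 : ℝ) 4 → 0 < L * rhoMP u := by
    filter_upwards [Measure.ae_ne volume (4 : ℝ)] with u hu4 hu
    rw [uIoc_of_le zero_le_four] at hu
    exact mul_pos hL (rhoMP_pos ⟨hu.1, lt_of_le_of_ne hu.2 hu4⟩)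
  have hslope := tendsto_slope_integral_mul_Bgoe (intervalIntegrable_rhoMP.const_mul L) hpos
  have hmass : ∫ u in (0 : ℝ)..4, L * rhoMP u = L := by
    rw [intervalIntegral.integral_const_mul, integral_rhoMP, mul_one]
  simp only [hmass, sub_zero, show ∀ u, 2 * π * (L * rhoMP u) = 2 * π * rhoMP u * L from
    fun u => by ring] at hslope
  exact hslope
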